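/- At the point (u0, v0) with u0 = (sqrt(15) + sqrt(5))/20 + i*(sqrt(15) - sqrt(5))/20 and v0 = (sqrt(15) + sqrt(5))/20 - i*(sqrt(15) - sqrt(5))/20, the implicit first-derivative relation for P(u,v) = 0 holds with v0' = (-294573*sqrt(3) + 82573*i)/516854; that is, (d/du P)(u0, v0) + v0' * (d/dv P)(u0, v0) = 0, where d/du P and d/dv P denote the formal partial derivatives of the polynomial P in u and v respectively. -/

import Mathlib

open Complex

/-- The Chan–Liaw level-3 degree-23 modular polynomial. -/
noncomputable def chanLiawP (u v : ℂ) : ℂ :=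
  (u^8 + v^8) - 12 * (Real.sqrt 3 : ℂ) * (u^7 * v + u * v^7) - 87 * (u^6 * v^2 + u^2 * v^6)
    - 84 * (Real.sqrt 3 : ℂ) * (u^5 * v^3 + u^3 * v^5) - 160 * (u^4 * v^4)
    - 2 * (u^4 + v^4) - 15 * (Real.sqrt 3 : ℂ) * (u^3 * v + u * v^3) - 48 * (u^2 * v^2) + 1

/-- The formal partial derivative `∂P/∂u` of the Chan–Liaw polynomial. -/
noncomputable def chanLiawP_u (u v : ℂ) : ℂ :=
  8 * u^7 - 12 * (Real.sqrt 3 : ℂ) * (7 * u^6 * v + v^7)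
    - 87 * (6 * u^5 * v^2 + 2 * u * v^6)
    - 84 * (Real.sqrt 3 : ℂ) * (5 * u^4 * v^3 + 3 * u^2 * v^5)
    - 640 * u^3 * v^4 - 8 * u^3
    - 15 * (Real.sqrt 3 : ℂ) * (3 * u^2 * v + v^3) - 96 * u * v^2

/-- The formal partial derivative `∂P/∂v` of the Chan–Liaw polynomial. -/
noncomputable def chanLiawP_v (u v : ℂ) : ℂ :=
  8 * v^7 - 12 * (Real.sqrt 3 : ℂ) * (u^7 + 7 * u * v^6)
    - 87 * (2 * u^6 * v + 6 * u^2 * v^5)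
    - 84 * (Real.sqrt 3 : ℂ) * (3 * u^5 * v^2 + 5 * u^3 * v^4)
    - 640 * u^4 * v^3 - 8 * v^3
    - 15 * (Real.sqrt 3 : ℂ) * (u^3 + 3 * u * v^2) - 96 * u^2 * v

/-!
The point is `u₀ = e^{iπ/12}/√10`, `v₀ = conj u₀`, so `u₀² = (√3 + i)/20` and
`v₀ = (√3 - i)/2 · u₀`. Both partial derivatives only have terms of total degree 7 and 3, so
substituting `v = (√3 - i)/2 · u` and `u⁴ = (1 + √3 i)/200` makes each of them `u₀³` times an
element of `ℚ(√3, i)`; `v₀'` is minus the quotient of these two elements.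
-/

namespace Complex

lemma ofReal_sqrt_ofNat_sq (n : ℕ) [n.AtLeastTwo] :
    ((Real.sqrt (OfNat.ofNat n) : ℝ) : ℂ) ^ 2 = OfNat.ofNat n := by
  rw [← ofReal_pow, Real.sq_sqrt (Nat.ofNat_nonneg _), ofReal_ofNat]

lemma ofReal_sqrt_fifteen : (Real.sqrt 15 : ℂ) = (Real.sqrt 3 : ℂ) * (Real.sqrt 5 : ℂ) := by
  rw [← ofReal_mul, ← Real.sqrt_mul (by norm_num)]
  norm_num

end Complex

noncomputable def chanLiawU₀ : ℂ :=
  ((Real.sqrt 15 : ℂ) + (Real.sqrt 5 : ℂ)) / 20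
    + I * (((Real.sqrt 15 : ℂ) - (Real.sqrt 5 : ℂ)) / 20)

noncomputable def chanLiawV₀ : ℂ :=
  ((Real.sqrt 15 : ℂ) + (Real.sqrt 5 : ℂ)) / 20
    - I * (((Real.sqrt 15 : ℂ) - (Real.sqrt 5 : ℂ)) / 20)

lemma chanLiawU₀_sq : chanLiawU₀ ^ 2 = ((Real.sqrt 3 : ℂ) + I) / 20 := by
  simp only [chanLiawU₀, ofReal_sqrt_fifteen]
  grind [ofReal_sqrt_ofNat_sq 3, ofReal_sqrt_ofNat_sq 5, I_sq]

lemma chanLiawV₀_eq : chanLiawV₀ = ((Real.sqrt 3 : ℂ) - I) / 2 * chanLiawU₀ := by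
  simp only [chanLiawU₀, chanLiawV₀, ofReal_sqrt_fifteen]
  grind [ofReal_sqrt_ofNat_sq 3, I_sq]

lemma chanLiawP_u_eq {u v : ℂ} (hu : u ^ 2 = ((Real.sqrt 3 : ℂ) + I) / 20)
    (hv : v = ((Real.sqrt 3 : ℂ) - I) / 2 * u) :
    chanLiawP_u u v = u ^ 3 * ((-13839 + 9387 * (Real.sqrt 3 : ℂ) * I) / 100) := by
  unfold chanLiawP_u
  grind [ofReal_sqrt_ofNat_sq 3, I_sq]

lemma chanLiawP_v_eq {u v : ℂ} (hu : u ^ 2 = ((Real.sqrt 3 : ℂ) + I) / 20)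
    (hv : v = ((Real.sqrt 3 : ℂ) - I) / 2 * u) :
    chanLiawP_v u v = u ^ 3 * ((-9387 * (Real.sqrt 3 : ℂ) + 13839 * I) / 100) := by
  unfold chanLiawP_v
  grind [ofReal_sqrt_ofNat_sq 3, I_sq]

lemma chanLiaw_slope_mul_coeff_v_eq_neg_coeff_u :
    (-294573 * (Real.sqrt 3 : ℂ) + 82573 * I) / 516854
        * ((-9387 * (Real.sqrt 3 : ℂ) + 13839 * I) / 100)
      = -((-13839 + 9387 * (Real.sqrt 3 : ℂ) * I) / 100) := by
  grind [ofReal_sqrt_ofNat_sq 3, I_sq]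

/-- The implicit first-derivative relation `P_u(u₀,v₀) + v₀' ⬝ P_v(u₀,v₀) = 0` with
`v₀' = (-294573√3 + 82573 i)/516854`. -/
theorem implicit_first_derivative_relation :
    chanLiawP_u
        (((Real.sqrt 15 : ℂ) + (Real.sqrt 5 : ℂ))/20
          + I * (((Real.sqrt 15 : ℂ) - (Real.sqrt 5 : ℂ))/20))
        (((Real.sqrt 15 : ℂ) + (Real.sqrt 5 : ℂ))/20
          - I * (((Real.sqrt 15 : ℂ) - (Real.sqrt 5 : ℂ))/20))
      + ((-294573 * (Real.sqrt 3 : ℂ) + 82573 * I) / 516854) *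
        chanLiawP_v
          (((Real.sqrt 15 : ℂ) + (Real.sqrt 5 : ℂ))/20
            + I * (((Real.sqrt 15 : ℂ) - (Real.sqrt 5 : ℂ))/20))
          (((Real.sqrt 15 : ℂ) + (Real.sqrt 5 : ℂ))/20
            - I * (((Real.sqrt 15 : ℂ) - (Real.sqrt 5 : ℂ))/20)) = 0 := by
  change chanLiawP_u chanLiawU₀ chanLiawV₀ + _ * chanLiawP_v chanLiawU₀ chanLiawV₀ = 0
  rw [chanLiawP_u_eq chanLiawU₀_sq chanLiawV₀_eq,
    chanLiawP_v_eq chanLiawU₀_sq chanLiawV₀_eq]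
  linear_combination chanLiawU₀ ^ 3 * chanLiaw_slope_mul_coeff_v_eq_neg_coeff_u
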